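/- arXiv:2009.00843 — 4 statements merged into one kernel-verified Lean document; each statement's English description precedes it below -/
import Mathlib

section
/- Let G be a subcubic planar graph and let I be an independent set of G. Then the subgraph of the exact square G^{[#2]} induced by I is planar. -/
/-- The exact square of a graph `G`: two distinct vertices are adjacent iff
their distance in `G` is exactly `2`. -/
def exactSquare {V : Type*} (G : SimpleGraph V) : SimpleGraph V where
  Adj u v := G.dist u v = 2
  symm := by constructor; intro u v h; rwa [SimpleGraph.dist_comm]
  loopless := by constructor; intro v h; simp [SimpleGraph.dist_self] at h

/-- `G` has `H` as a minor: there is a family of nonempty, pairwise disjoint,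
connected branch sets in `G`, one for each vertex of `H`, such that every edge
of `H` is realized by an edge of `G` between the corresponding branch sets. -/
def HasMinor {V W : Type*} (G : SimpleGraph V) (H : SimpleGraph W) : Prop :=
  ∃ B : W → Set V,
    (∀ w, (B w).Nonempty) ∧
    (∀ w, (G.induce (B w)).Connected) ∧
    (Pairwise fun w w' => Disjoint (B w) (B w')) ∧
    ∀ ⦃w w'⦄, H.Adj w w' → ∃ u ∈ B w, ∃ v ∈ B w', G.Adj u v

/-- Planarity, via Wagner's theorem: a graph is planar iff it has neither a
`K₅` minor nor a `K₃,₃` minor. -/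
def IsPlanar {V : Type*} (G : SimpleGraph V) : Prop :=
  ¬ HasMinor G (SimpleGraph.completeGraph (Fin 5)) ∧
    ¬ HasMinor G (completeBipartiteGraph (Fin 3) (Fin 3))

/-!
Every edge of the exact square inside the independent set `I` comes from a common neighbour
outside `I`. Keep only the edges of `G` between `I` and its complement, so that the complement
becomes independent too, and eliminate its vertices one at a time: each is isolated and its at most
three neighbours are made pairwise adjacent. The final graph contains the exact square on `I`.

Eliminating a vertex `w` of degree at most three preserves planarity. Take a minor model of `K₅` or
`K₃,₃` after the elimination; its new edges join neighbours of `w`, of which there are at most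
three. If one branch set holds two of them, or the branch-set pairs needing a new edge all share a
branch set, adding `w` to that branch set gives a model in `G`. Otherwise those pairs form a
triangle of the pattern graph, and `w` becomes the centre of a Δ-Y exchange on it: this is
impossible for the triangle-free `K₃,₃`, and turns `K₅` into a graph containing `K₃,₃`.
-/

open Set Function SimpleGraph

section

variable {V V' W W' : Type*}

structure IsMinorModel (G : SimpleGraph V) (K : SimpleGraph W) (B : W → Set V) : Prop where
  nonempty : ∀ s, (B s).Nonempty
  connected : ∀ s, (G.induce (B s)).Connected
  disjoint : Pairwise (Disjoint on B)
  adj : ∀ ⦃p q⦄, K.Adj p q → ∃ u ∈ B p, ∃ v ∈ B q, G.Adj u v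

section Minor

variable {G : SimpleGraph V} {G' : SimpleGraph V'} {K : SimpleGraph W} {K' : SimpleGraph W'}

lemma hasMinor_iff_exists_isMinorModel : HasMinor G K ↔ ∃ B, IsMinorModel G K B :=
  ⟨fun ⟨B, h₁, h₂, h₃, h₄⟩ => ⟨B, h₁, h₂, h₃, h₄⟩,
    fun ⟨B, h⟩ => ⟨B, h.nonempty, h.connected, h.disjoint, h.adj⟩⟩

lemma IsMinorModel.hasMinor {B : W → Set V} (hB : IsMinorModel G K B) : HasMinor G K :=
  hasMinor_iff_exists_isMinorModel.2 ⟨B, hB⟩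

lemma IsMinorModel.image {B : W → Set V} (hB : IsMinorModel G K B) (f : Copy G G') :
    IsMinorModel G' K (fun s => f '' B s) where
  nonempty s := (hB.nonempty s).image f
  connected s := by
    let φ : G.induce (B s) →g G'.induce (f '' B s) :=
      ⟨fun x => ⟨f x, mem_image_of_mem f x.2⟩, fun h => f.toHom.map_adj h⟩
    refine (hB.connected s).map φ ?_
    rintro ⟨_, x, hx, rfl⟩
    exact ⟨⟨x, hx⟩, rfl⟩
  disjoint _ _ h := (disjoint_image_iff f.injective).2 (hB.disjoint h)
  adj p q h := by
    obtain ⟨u, hu, v, hv, huv⟩ := hB.adj h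
    exact ⟨f u, mem_image_of_mem f hu, f v, mem_image_of_mem f hv, f.toHom.map_adj huv⟩

lemma IsMinorModel.comp {B : W → Set V} (hB : IsMinorModel G K B) (f : Copy K' K) :
    IsMinorModel G K' (B ∘ f) where
  nonempty s := hB.nonempty (f s)
  connected s := hB.connected (f s)
  disjoint _ _ h := hB.disjoint (f.injective.ne h)
  adj _ _ h := hB.adj (f.toHom.map_adj h)

lemma IsMinorModel.finite [Finite V] {B : W → Set V} (hB : IsMinorModel G K B) : Finite W :=
  Finite.of_injective (fun s => (hB.nonempty s).some) fun s t h => by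
    by_contra hst
    have h : (hB.nonempty s).some = (hB.nonempty t).some := h
    exact Set.disjoint_left.1 (hB.disjoint hst) (hB.nonempty s).some_mem
      (h ▸ (hB.nonempty t).some_mem)

lemma HasMinor.mono (hG : G ⊑ G') (hK : K' ⊑ K) (h : HasMinor G K) : HasMinor G' K' := by
  obtain ⟨B, hB⟩ := hasMinor_iff_exists_isMinorModel.1 h
  obtain ⟨f⟩ := hG
  obtain ⟨g⟩ := hK
  exact ((hB.comp g).image f).hasMinor

lemma IsPlanar.anti (hG : G ⊑ G') (h : IsPlanar G') : IsPlanar G :=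
  ⟨fun hm => h.1 (hm.mono hG .rfl), fun hm => h.2 (hm.mono hG .rfl)⟩

end Minor

lemma sum_ncard_inter_le [Finite V] [Fintype W] {A : W → Set V}
    (hA : Pairwise (Disjoint on A)) (N : Set V) : ∑ s, (A s ∩ N).ncard ≤ N.ncard := by
  rw [← finsum_eq_sum_of_fintype,
    ← ncard_iUnion_of_finite (s := fun s => A s ∩ N) (fun _ => toFinite _)
      fun s t h => (hA h).mono inter_subset_left inter_subset_left]
  exact ncard_le_ncard (iUnion_subset fun _ => inter_subset_right)

lemma card_filter_nonempty_le_sum_ncard [Finite V] [Fintype W] (A : W → Set V)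
    [DecidablePred fun s => (A s).Nonempty] :
    (Finset.univ.filter fun s => (A s).Nonempty).card ≤ ∑ s, (A s).ncard := by
  have := (Finset.univ.filter fun s => (A s).Nonempty).card_nsmul_le_sum (fun s => (A s).ncard) 1
    fun s hs => (ncard_pos (toFinite _)).2 (Finset.mem_filter.1 hs).2
  rw [smul_eq_mul, mul_one] at this
  exact this.trans (Finset.sum_le_sum_of_subset (Finset.subset_univ _))

namespace SimpleGraph

lemma exists_triangle_of_forall_exists_adj_ne [DecidableEq W] (R : SimpleGraph W)
    {S : Finset W} (hS : S.card ≤ 3) (hRS : ∀ ⦃p q⦄, R.Adj p q → p ∈ S) {i j : W}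
    (hij : R.Adj i j) (hR : ∀ t, ∃ p q, R.Adj p q ∧ p ≠ t ∧ q ≠ t) :
    ∃ k, R.Adj i k ∧ R.Adj j k ∧ S = {i, j, k} := by
  obtain ⟨p, q, hpq, hpi, hqi⟩ := hR i
  have hj : j = p ∨ j = q := by
    by_contra! h
    have h4 : ({i, j, p, q} : Finset W).card = 4 := by
      rw [Finset.card_insert_of_notMem, Finset.card_insert_of_notMem, Finset.card_pair hpq.ne] <;>
        simp_all [hij.ne, eq_comm]
    have := Finset.card_le_card (s := {i, j, p, q}) (t := S) (by
      simp [Finset.insert_subset_iff, hRS hij, hRS hij.symm, hRS hpq, hRS hpq.symm])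
    omega
  obtain ⟨k, hjk, hki⟩ : ∃ k, R.Adj j k ∧ k ≠ i := by
    rcases hj with rfl | rfl
    exacts [⟨q, hpq, hqi⟩, ⟨p, hpq.symm, hpi⟩]
  have hSijk : S = {i, j, k} := by
    refine (Finset.eq_of_subset_of_card_le ?_ ?_).symm
    · simp [Finset.insert_subset_iff, hRS hij, hRS hjk, hRS hjk.symm]
    · rw [Finset.card_eq_three.2 ⟨i, j, k, hij.ne, hki.symm, hjk.ne, rfl⟩]
      exact hS
  obtain ⟨r, s, hrs, hrj, hsj⟩ := hR j
  have hr := hRS hrs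
  have hs := hRS hrs.symm
  simp only [hSijk, Finset.mem_insert, Finset.mem_singleton] at hr hs
  refine ⟨k, ?_, hjk, hSijk⟩
  rcases hr with rfl | rfl | rfl <;> rcases hs with rfl | rfl | rfl <;>
    first | exact hrs | exact hrs.symm | exact absurd rfl hrj | exact absurd rfl hsj |
      exact absurd hrs R.irrefl

lemma completeBipartiteGraph_cliqueFree_three {α β : Type*} :
    (completeBipartiteGraph α β).CliqueFree 3 := by
  classical
  intro s hs
  obtain ⟨a, b, c, hab, hac, hbc, -⟩ := is3Clique_iff.1 hs
  rcases a with a | a <;> rcases b with b | b <;> rcases c with c | c <;>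
    simp_all [completeBipartiteGraph]

def deltaY (K : SimpleGraph W) (T : Set W) : SimpleGraph (Option W) where
  Adj
    | some a, some b => K.Adj a b ∧ ¬ (a ∈ T ∧ b ∈ T)
    | none, some a | some a, none => a ∈ T
    | none, none => False
  symm := ⟨by rintro (_ | a) (_ | b) h <;> simp_all [K.adj_comm, and_comm]⟩
  loopless := ⟨by rintro (_ | a) h; exacts [h, h.1.ne rfl]⟩

lemma completeBipartiteGraph_isContained_deltaY_top {α β : Type*} [Fintype α] [Fintype β]
    [Fintype W] [DecidableEq W] {T : Finset W} (hα : T.card = Fintype.card α)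
    (hβ : Tᶜ.card + 1 = Fintype.card β) :
    completeBipartiteGraph α β ⊑ (⊤ : SimpleGraph W).deltaY T := by
  refine completeBipartiteGraph_isContained_iff.2
    ⟨T.map .some, insert none (Tᶜ.map .some), by simpa using hα, by simpa using hβ, ?_⟩
  rintro _ ha _ hb
  simp only [Finset.coe_map, Finset.coe_insert, mem_image, Finset.mem_coe, mem_insert_iff,
    Finset.mem_compl] at ha hb
  obtain ⟨a, ha, rfl⟩ := ha
  rcases hb with rfl | ⟨b, hb, rfl⟩
  · exact ha
  · exact ⟨fun hab => hb (hab ▸ ha), fun h => hb h.2⟩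

def eliminate (G : SimpleGraph V) (S : Set V) : SimpleGraph V where
  Adj u v := u ≠ v ∧ u ∉ S ∧ v ∉ S ∧ (G.Adj u v ∨ ∃ x ∈ S, G.Adj x u ∧ G.Adj x v)
  symm := ⟨fun _ _ ⟨h, hu, hv, h'⟩ =>
    ⟨h.symm, hv, hu, h'.imp (fun h => h.symm) fun ⟨x, hx, hxu, hxv⟩ => ⟨x, hx, hxv, hxu⟩⟩⟩
  loopless := ⟨fun _ h => h.1 rfl⟩

variable {G : SimpleGraph V} {S : Set V} {w : V}

lemma eliminate_singleton_adj {u v : V} : (G.eliminate {w}).Adj u v ↔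
    u ≠ v ∧ u ≠ w ∧ v ≠ w ∧ (G.Adj u v ∨ G.Adj w u ∧ G.Adj w v) := by
  simp [eliminate]

lemma adj_or_adj_adj_of_eliminate_singleton_adj {a b : V} (h : (G.eliminate {w}).Adj a b) :
    G.Adj a b ∨ G.Adj w a ∧ G.Adj w b :=
  (eliminate_singleton_adj.1 h).2.2.2

lemma adj_of_eliminate_singleton_adj [Finite V] {X : Set V}
    (hX : (X ∩ G.neighborSet w).ncard ≤ 1) {a b : V} (ha : a ∈ X) (hb : b ∈ X)
    (hab : (G.eliminate {w}).Adj a b) : G.Adj a b :=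
  (adj_or_adj_adj_of_eliminate_singleton_adj hab).resolve_right fun ⟨hwa, hwb⟩ =>
    hX.not_gt ((one_lt_ncard_iff (toFinite _)).2 ⟨a, b, ⟨ha, hwa⟩, ⟨hb, hwb⟩, hab.ne⟩)

lemma eliminate_empty : G.eliminate ∅ = G := by
  ext u v
  simpa [eliminate] using G.ne_of_adj

lemma eliminate_insert_le (a : V) :
    G.eliminate (insert a S) ≤ (G.eliminate S).eliminate {a} := by
  rintro u v ⟨huv, hu, hv, h⟩
  rw [mem_insert_iff, not_or] at hu hv
  refine eliminate_singleton_adj.2 ⟨huv, hu.1, hv.1, ?_⟩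
  rcases h with h | ⟨x, hx, hxu, hxv⟩
  · exact Or.inl ⟨huv, hu.2, hv.2, Or.inl h⟩
  by_cases hxS : x ∈ S
  · exact Or.inl ⟨huv, hu.2, hv.2, Or.inr ⟨x, hxS, hxu, hxv⟩⟩
  obtain rfl : x = a := hx.resolve_right hxS
  exact Or.inr ⟨⟨hxu.ne, hxS, hu.2, Or.inl hxu⟩, ⟨hxv.ne, hxS, hv.2, Or.inl hxv⟩⟩

lemma neighborSet_eliminate_subset {a : V} (ha : ∀ x ∈ S, ¬ G.Adj x a) :
    (G.eliminate S).neighborSet a ⊆ G.neighborSet a := by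
  rintro v ⟨-, -, -, h | ⟨x, hx, hxa, -⟩⟩
  · exact h
  · exact absurd hxa (ha x hx)

lemma connected_induce_insert_of_eliminate {X : Set V}
    (hX : ((G.eliminate {w}).induce X).Connected) {x : V} (hx : x ∈ X) (hwx : G.Adj w x) :
    (G.induce (insert w X)).Connected := by
  set H := G.induce (insert w X)
  let ι : X → ↥(insert w X) := inclusion (subset_insert w X)
  let w' : ↥(insert w X) := ⟨w, mem_insert w X⟩
  have hstep : ∀ a b, ((G.eliminate {w}).induce X).Adj a b → H.Reachable (ι a) (ι b) := by
    intro a b hab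
    rcases adj_or_adj_adj_of_eliminate_singleton_adj hab with h | ⟨ha, hb⟩
    · exact (show H.Adj (ι a) (ι b) from h).reachable
    · exact (show H.Adj (ι a) w' from ha.symm).reachable.trans
        (show H.Adj w' (ι b) from hb).reachable
  have hlift : ∀ a b, ((G.eliminate {w}).induce X).Reachable a b → H.Reachable (ι a) (ι b) := by
    simp only [reachable_iff_reflTransGen]
    exact Relation.ReflTransGen.lift' ι fun a b hab => (reachable_iff_reflTransGen _ _).1
      (hstep a b hab)
  rw [connected_iff_exists_forall_reachable]
  refine ⟨w', ?_⟩
  rintro ⟨v, rfl | hv⟩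
  · rfl
  · exact (show H.Adj w' (ι ⟨x, hx⟩) from hwx).reachable.trans
      (hlift ⟨x, hx⟩ ⟨v, hv⟩ (hX.preconnected _ _))

end SimpleGraph

def unrealizedGraph (G : SimpleGraph V) (K : SimpleGraph W) (B : W → Set V) :
    SimpleGraph W where
  Adj p q := K.Adj p q ∧ ¬ ∃ u ∈ B p, ∃ v ∈ B q, G.Adj u v
  symm := ⟨fun _ _ ⟨h, h'⟩ => ⟨h.symm, fun ⟨u, hu, v, hv, huv⟩ => h' ⟨v, hv, u, hu, huv.symm⟩⟩⟩
  loopless := ⟨fun _ h => h.1.ne rfl⟩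

namespace IsMinorModel

variable {G : SimpleGraph V} {w : V} {K : SimpleGraph W} {B : W → Set V}

lemma notMem_of_eliminate (hB : IsMinorModel (G.eliminate {w}) K B)
    (hK : ∀ p, ∃ q, K.Adj p q) (s : W) : w ∉ B s := by
  intro hws
  obtain ⟨q, hsq⟩ := hK s
  obtain ⟨u, hu, v, -, huv⟩ := hB.adj hsq
  -- `w` is isolated in `G.eliminate {w}`, so no walk inside its branch set leads to `u`
  obtain ⟨p⟩ := (hB.connected s).preconnected ⟨w, hws⟩ ⟨u, hu⟩
  cases p with
  | nil => exact (eliminate_singleton_adj.1 huv).2.1 rfl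
  | cons h _ => exact (eliminate_singleton_adj.1 h).2.1 rfl

lemma inter_neighborSet_nonempty_of_unrealizedGraph_adj
    (hB : IsMinorModel (G.eliminate {w}) K B) {p q : W} (h : (unrealizedGraph G K B).Adj p q) :
    (B p ∩ G.neighborSet w).Nonempty := by
  obtain ⟨u, hu, v, hv, huv⟩ := hB.adj h.1
  rcases adj_or_adj_adj_of_eliminate_singleton_adj huv with h' | ⟨hwu, -⟩
  exacts [absurd ⟨u, hu, v, hv, h'⟩ h.2, ⟨u, hu, hwu⟩]

lemma hasMinor_of_insert (hB : IsMinorModel (G.eliminate {w}) K B)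
    (hw : ∀ s, w ∉ B s) {t : W} {x : V} (hx : x ∈ B t) (hwx : G.Adj w x)
    (hin : ∀ s ≠ t, ∀ a ∈ B s, ∀ b ∈ B s, (G.eliminate {w}).Adj a b → G.Adj a b)
    (hout : ∀ p q, K.Adj p q → p ≠ t → q ≠ t → ∃ u ∈ B p, ∃ v ∈ B q, G.Adj u v) :
    HasMinor G K := by
  classical
  have hadj : ∀ q, K.Adj t q → ∃ u ∈ insert w (B t), ∃ v ∈ B q, G.Adj u v := by
    intro q htq
    obtain ⟨u, hu, v, hv, huv⟩ := hB.adj htq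
    rcases adj_or_adj_adj_of_eliminate_singleton_adj huv with h | ⟨-, hwv⟩
    exacts [⟨u, mem_insert_of_mem w hu, v, hv, h⟩, ⟨w, mem_insert w _, v, hv, hwv⟩]
  refine IsMinorModel.hasMinor (B := update B t (insert w (B t)))
    ⟨fun s => ?_, fun s => ?_, fun p q hpq => ?_, fun p q hpq => ?_⟩
  · rcases eq_or_ne s t with rfl | hst
    · simp
    · simpa [update_of_ne hst] using hB.nonempty s
  · rcases eq_or_ne s t with rfl | hst
    · rw [update_self]
      exact connected_induce_insert_of_eliminate (hB.connected s) hx hwx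
    · rw [update_of_ne hst]
      exact (hB.connected s).mono fun a b hab => hin s hst a a.2 b b.2 hab
  · rcases eq_or_ne p t with rfl | hpt
    · rw [onFun, update_self, update_of_ne hpq.symm]
      exact disjoint_insert_left.2 ⟨hw q, hB.disjoint hpq⟩
    rcases eq_or_ne q t with rfl | hqt
    · rw [onFun, update_self, update_of_ne hpq]
      exact disjoint_insert_right.2 ⟨hw p, hB.disjoint hpq⟩
    · simpa [onFun, update_of_ne hpt, update_of_ne hqt] using hB.disjoint hpq
  · rcases eq_or_ne p t with rfl | hpt
    · simpa [update_of_ne hpq.ne.symm] using hadj q hpq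
    rcases eq_or_ne q t with rfl | hqt
    · obtain ⟨u, hu, v, hv, huv⟩ := hadj p hpq.symm
      exact ⟨v, by simpa [update_of_ne hpt] using hv, u, by simpa using hu, huv.symm⟩
    · simpa [update_of_ne hpt, update_of_ne hqt] using hout p q hpq hpt hqt

lemma hasMinor_deltaY (hB : IsMinorModel (G.eliminate {w}) K B) (hw : ∀ s, w ∉ B s)
    (hconn : ∀ s, (G.induce (B s)).Connected) {T : Set W}
    (hT : ∀ t ∈ T, ∃ x ∈ B t, G.Adj w x)
    (hout : ∀ p q, K.Adj p q → ¬ (p ∈ T ∧ q ∈ T) → ∃ u ∈ B p, ∃ v ∈ B q, G.Adj u v) :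
    HasMinor G (K.deltaY T) := by
  refine IsMinorModel.hasMinor (B := fun o => o.elim {w} B) ⟨?_, ?_, ?_, ?_⟩
  · rintro (_ | s)
    exacts [singleton_nonempty w, hB.nonempty s]
  · rintro (_ | s)
    · simp
    · exact hconn s
  · rintro (_ | p) (_ | q) hpq
    · exact absurd rfl hpq
    · exact disjoint_singleton_left.2 (hw q)
    · exact disjoint_singleton_right.2 (hw p)
    · exact hB.disjoint fun h => hpq (congrArg _ h)
  · rintro (_ | p) (_ | q) hpq
    · exact hpq.elim
    · obtain ⟨x, hx, hwx⟩ := hT q hpq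
      exact ⟨w, rfl, x, hx, hwx⟩
    · obtain ⟨x, hx, hwx⟩ := hT p hpq
      exact ⟨x, hx, w, rfl, hwx.symm⟩
    · exact hout p q hpq.1 hpq.2

lemma hasMinor_of_one_lt_ncard [Finite V] [Fintype W]
    (hB : IsMinorModel (G.eliminate {w}) K B) (hw : ∀ s, w ∉ B s)
    (hsum : ∑ s, (B s ∩ G.neighborSet w).ncard ≤ 3) {t : W}
    (ht : 1 < (B t ∩ G.neighborSet w).ncard) : HasMinor G K := by
  classical
  set ℓ := fun s => (B s ∩ G.neighborSet w).ncard
  have hsum : ∑ s, ℓ s ≤ 3 := hsum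
  have ht' : 1 < ℓ t := ht
  obtain ⟨x, -, ⟨hx, hwx⟩, -⟩ := (one_lt_ncard_iff (toFinite _)).1 ht
  refine hB.hasMinor_of_insert hw hx hwx
    (fun s hst _ ha _ hb => adj_of_eliminate_singleton_adj ?_ ha hb)
    (fun p q hpq hpt hqt => not_not.1 fun h => ?_)
  · have : ℓ s + ℓ t ≤ ∑ s, ℓ s :=
      Finset.add_le_sum (fun _ _ => Nat.zero_le _) (Finset.mem_univ s) (Finset.mem_univ t) hst
    change ℓ s ≤ 1
    omega
  · have hpq' : (unrealizedGraph G K B).Adj p q := ⟨hpq, h⟩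
    have hp : 0 < ℓ p :=
      (ncard_pos (toFinite _)).2 (hB.inter_neighborSet_nonempty_of_unrealizedGraph_adj hpq')
    have hq : 0 < ℓ q :=
      (ncard_pos (toFinite _)).2 (hB.inter_neighborSet_nonempty_of_unrealizedGraph_adj hpq'.symm)
    have : ℓ p + ℓ q + ℓ t ≤ ∑ s, ℓ s := by
      calc ℓ p + ℓ q + ℓ t = ∑ s ∈ {p, q, t}, ℓ s := by
            rw [Finset.sum_insert (by simp [hpq.ne, hpt]), Finset.sum_pair hqt, add_assoc]
        _ ≤ ∑ s, ℓ s := Finset.sum_le_sum_of_subset (Finset.subset_univ _)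
    omega

lemma hasMinor_or_hasMinor_deltaY_of_ncard_le_one [Finite V] [Fintype W]
    (hB : IsMinorModel (G.eliminate {w}) K B) (hw : ∀ s, w ∉ B s)
    (hsum : ∑ s, (B s ∩ G.neighborSet w).ncard ≤ 3)
    (hle : ∀ s, (B s ∩ G.neighborSet w).ncard ≤ 1) :
    HasMinor G K ∨ ∃ i j k, K.Adj i j ∧ K.Adj i k ∧ K.Adj j k ∧
      HasMinor G (K.deltaY {i, j, k}) := by
  classical
  set R := unrealizedGraph G K B
  have hin : ∀ s, ∀ a ∈ B s, ∀ b ∈ B s, (G.eliminate {w}).Adj a b → G.Adj a b :=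
    fun s _ ha _ hb => adj_of_eliminate_singleton_adj (hle s) ha hb
  have hconn : ∀ s, (G.induce (B s)).Connected :=
    fun s => (hB.connected s).mono fun a b hab => hin s a a.2 b b.2 hab
  have hR : ∀ ⦃p q⦄, R.Adj p q → (B p ∩ G.neighborSet w).Nonempty :=
    fun _ _ => hB.inter_neighborSet_nonempty_of_unrealizedGraph_adj
  have hrealized : ∀ p q, K.Adj p q → ¬ R.Adj p q → ∃ u ∈ B p, ∃ v ∈ B q, G.Adj u v :=
    fun p q hpq h => not_not.1 fun h' => h ⟨hpq, h'⟩
  by_cases hbad : ∃ i j, R.Adj i j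
  swap
  · push Not at hbad
    exact Or.inl (IsMinorModel.hasMinor ⟨hB.nonempty, hconn, hB.disjoint,
      fun p q hpq => hrealized p q hpq (hbad p q)⟩)
  obtain ⟨i, j, hij⟩ := hbad
  by_cases hstar : ∃ t, ∀ p q, R.Adj p q → p = t ∨ q = t
  · obtain ⟨t, ht⟩ := hstar
    obtain ⟨x, hx, hwx⟩ : (B t ∩ G.neighborSet w).Nonempty := by
      rcases ht i j hij with rfl | rfl
      exacts [hR hij, hR hij.symm]
    exact Or.inl (hB.hasMinor_of_insert hw hx hwx (fun s _ => hin s)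
      fun p q hpq hpt hqt => hrealized p q hpq fun h => (ht p q h).elim hpt hqt)
  push Not at hstar
  set S := Finset.univ.filter fun s => (B s ∩ G.neighborSet w).Nonempty
  have hS : S.card ≤ 3 := (card_filter_nonempty_le_sum_ncard _).trans hsum
  obtain ⟨k, hik, hjk, hSijk⟩ := R.exists_triangle_of_forall_exists_adj_ne hS
    (fun p q h => Finset.mem_filter.2 ⟨Finset.mem_univ _, hR h⟩) hij hstar
  have hmem : ∀ ⦃p q⦄, R.Adj p q → p ∈ ({i, j, k} : Set W) := fun p q h => by
    have hp : p ∈ S := Finset.mem_filter.2 ⟨Finset.mem_univ _, hR h⟩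
    rw [hSijk] at hp
    simpa using hp
  refine Or.inr ⟨i, j, k, hij.1, hik.1, hjk.1, hB.hasMinor_deltaY hw hconn ?_
    fun p q hpq hpqT => hrealized p q hpq fun h => hpqT ⟨hmem h, hmem h.symm⟩⟩
  rintro t (rfl | rfl | rfl)
  exacts [hR hij, hR hij.symm, hR hik.symm]

theorem hasMinor_or_hasMinor_deltaY [Finite V]
    (hB : IsMinorModel (G.eliminate {w}) K B) (hK : ∀ p, ∃ q, K.Adj p q)
    (h3 : (G.neighborSet w).ncard ≤ 3) :
    HasMinor G K ∨ ∃ i j k, K.Adj i j ∧ K.Adj i k ∧ K.Adj j k ∧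
      HasMinor G (K.deltaY {i, j, k}) := by
  have := hB.finite
  cases nonempty_fintype W
  have hw := hB.notMem_of_eliminate hK
  have hsum := (sum_ncard_inter_le hB.disjoint (G.neighborSet w)).trans h3
  by_cases h : ∃ t, 1 < (B t ∩ G.neighborSet w).ncard
  · obtain ⟨t, ht⟩ := h
    exact Or.inl (hB.hasMinor_of_one_lt_ncard hw hsum ht)
  · push Not at h
    exact hB.hasMinor_or_hasMinor_deltaY_of_ncard_le_one hw hsum h

end IsMinorModel

theorem IsPlanar.eliminate_singleton [Finite V] {G : SimpleGraph V} {w : V} (hG : IsPlanar G)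
    (hw : (G.neighborSet w).ncard ≤ 3) : IsPlanar (G.eliminate {w}) := by
  classical
  have hK₅ : ∀ p : Fin 5, ∃ q, (completeGraph (Fin 5)).Adj p q := fun p => ⟨p + 1, by simp⟩
  have hK₃₃ : ∀ p, ∃ q, (completeBipartiteGraph (Fin 3) (Fin 3)).Adj p q := by
    rintro (a | a)
    exacts [⟨.inr a, by simp⟩, ⟨.inl a, by simp⟩]
  refine ⟨fun h => ?_, fun h => ?_⟩
  · obtain ⟨B, hB⟩ := hasMinor_iff_exists_isMinorModel.1 h
    rcases hB.hasMinor_or_hasMinor_deltaY hK₅ hw with h | ⟨i, j, k, hij, hik, hjk, h⟩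
    · exact hG.1 h
    have hT : ({i, j, k} : Finset (Fin 5)).card = 3 :=
      Finset.card_eq_three.2 ⟨i, j, k, hij.ne, hik.ne, hjk.ne, rfl⟩
    have hK := completeBipartiteGraph_isContained_deltaY_top (α := Fin 3) (β := Fin 3) hT
      (by rw [Finset.card_compl, hT]; rfl)
    rw [Finset.coe_insert, Finset.coe_pair] at hK
    exact hG.2 (h.mono .rfl hK)
  · obtain ⟨B, hB⟩ := hasMinor_iff_exists_isMinorModel.1 h
    rcases hB.hasMinor_or_hasMinor_deltaY hK₃₃ hw with h | ⟨i, j, k, hij, hik, hjk, -⟩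
    · exact hG.2 h
    exact completeBipartiteGraph_cliqueFree_three _ (is3Clique_triple_iff.2 ⟨hij, hik, hjk⟩)

theorem IsPlanar.eliminate [Finite V] {G : SimpleGraph V} {S : Set V} (hG : IsPlanar G)
    (hS : ∀ x ∈ S, ∀ y ∈ S, ¬ G.Adj x y) (hdeg : ∀ x ∈ S, (G.neighborSet x).ncard ≤ 3) :
    IsPlanar (G.eliminate S) := by
  refine S.toFinite.induction_on_subset (motive := fun T _ => IsPlanar (G.eliminate T)) S
    (by rwa [eliminate_empty]) fun {a T} ha hTS _ ih => ?_
  have hdeg' : ((G.eliminate T).neighborSet a).ncard ≤ 3 :=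
    (ncard_le_ncard (neighborSet_eliminate_subset fun x hx => hS x (hTS hx) a ha)).trans
      (hdeg a ha)
  exact (ih.eliminate_singleton hdeg').anti (.of_le (eliminate_insert_le a))

lemma commonNeighbors_nonempty_of_exactSquare_adj {G : SimpleGraph V} {u v : V}
    (h : (exactSquare G).Adj u v) : (G.commonNeighbors u v).Nonempty := by
  have h2 : G.dist u v = 2 := h
  have hr : G.Reachable u v := Reachable.of_dist_ne_zero (by omega)
  have h2' : G.edist u v = 2 := by
    rw [← hr.coe_dist_eq_edist, h2]
    rfl
  exact (edist_eq_two_iff.1 h2').2.2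

end

/-- If `G` is a subcubic planar graph and `I` is an independent set of `G`,
then the subgraph of the exact square of `G` induced by `I` is planar. -/
theorem exactSquare_induce_indepSet_planar {V : Type*} [Fintype V]
    (G : SimpleGraph V) (hplanar : IsPlanar G)
    (hdeg : ∀ v : V, (G.neighborSet v).ncard ≤ 3)
    (I : Set V) (hI : ∀ u ∈ I, ∀ v ∈ I, ¬ G.Adj u v) :
    IsPlanar ((exactSquare G).induce I) := by
  have hG₀ : IsPlanar ((G.between I Iᶜ).eliminate Iᶜ) :=
    (hplanar.anti (.of_le between_le)).eliminate
      (fun x hx y hy h => by simp_all [between_adj])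
      (fun x _ => (ncard_le_ncard (fun _ h => between_le h)).trans (hdeg x))
  refine hG₀.anti ⟨⟨⟨Subtype.val, fun {u v} huv => ?_⟩, Subtype.val_injective⟩⟩
  obtain ⟨m, hum, hvm⟩ := commonNeighbors_nonempty_of_exactSquare_adj huv
  have hm : m ∉ I := fun hm => hI u u.2 m hm hum
  exact ⟨Subtype.val_injective.ne huv.ne, not_not.2 u.2, not_not.2 v.2, Or.inr
    ⟨m, hm, ⟨hum.symm, Or.inr ⟨hm, u.2⟩⟩, ⟨hvm.symm, Or.inr ⟨hm, v.2⟩⟩⟩⟩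
end

section
/- There exists a bipartite subcubic K_4-minor-free graph G of girth 6 with ω^{[#2]}(G) = 4. In particular, the graph K_{2,3}-subdivided (two vertices joined by three internally disjoint paths of length 3) has an exact square containing K_4. -/
open SimpleGraph Finset

namespace SimpleGraph

variable {V : Type*} {G : SimpleGraph V}

lemma exactSquare_adj {u v : V} :
    (exactSquare G).Adj u v ↔ u ≠ v ∧ ¬G.Adj u v ∧ ∃ w, G.Adj u w ∧ G.Adj w v := by
  change (G.edist u v).toNat = 2 ↔ _
  simp [ENat.toNat_eq_iff two_ne_zero, edist_eq_two_iff, Set.Nonempty, mem_commonNeighbors,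
    adj_comm]

lemma Walk.IsCycle.exists_of_length_eq_four {a : V} {c : G.Walk a a} (hc : c.IsCycle)
    (hlen : c.length = 4) :
    ∃ x y z t, G.Adj x y ∧ G.Adj y z ∧ G.Adj z t ∧ G.Adj t x ∧ x ≠ z ∧ y ≠ t := by
  have hadj (i : ℕ) (hi : i < 4) : G.Adj (c.getVert i) (c.getVert (i + 1)) :=
    c.adj_getVert_succ (hlen ▸ hi)
  have hinj := hc.getVert_injOn'
  refine ⟨c.getVert 0, c.getVert 1, c.getVert 2, c.getVert 3, hadj 0 (by norm_num),
    hadj 1 (by norm_num), hadj 2 (by norm_num), ?_, fun h => ?_, fun h => ?_⟩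
  · simpa [← hlen, c.getVert_length] using hadj 3 (by norm_num)
  · have := hinj (by simp [hlen]) (by simp [hlen]) h; omega
  · have := hinj (by simp [hlen]) (by simp [hlen]) h; omega

lemma six_le_egirth_of_colorable_two (h2 : G.Colorable 2)
    (hC4 : ∀ x y z t, G.Adj x y → G.Adj y z → G.Adj z t → G.Adj t x → x = z ∨ y = t) :
    6 ≤ G.egirth := by
  refine le_egirth.2 fun a c hc => ?_
  obtain ⟨k, hk⟩ := two_colorable_iff_forall_loop_even.1 h2 a c
  have h3 := hc.three_le_length
  have h4 : c.length ≠ 4 := fun hlen => by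
    obtain ⟨x, y, z, t, hxy, hyz, hzt, htx, hxz, hyt⟩ := hc.exists_of_length_eq_four hlen
    exact (hC4 x y z t hxy hyz hzt htx).elim hxz hyt
  exact_mod_cast (show 6 ≤ c.length by omega)

section Finite

variable [Fintype V] [DecidableEq V] [DecidableRel G.Adj]

lemma degree_induce_coe_finset (S : Finset V) (v : S) :
    (G.induce (S : Set V)).degree v = #(G.neighborFinset v ∩ S) := by
  have := congrArg card (G.map_neighborFinset_induce (s := (S : Set V)) v)
  rw [card_map, toFinset_coe] at this
  rw [← this, card_neighborFinset_eq_degree]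
  -- the two sides differ only in the `Fintype` instance on the subtype `S`
  convert rfl

lemma sum_card_neighborFinset_sdiff_add_le (S : Finset V)
    (hS : (G.induce (S : Set V)).Connected) :
    ∑ v ∈ S, #(G.neighborFinset v \ S) + 2 * #S ≤ ∑ v ∈ S, G.degree v + 2 := by
  have hsplit : ∑ v ∈ S, G.degree v =
      ∑ v ∈ S, #(G.neighborFinset v ∩ S) + ∑ v ∈ S, #(G.neighborFinset v \ S) := by
    rw [← sum_add_distrib]
    refine sum_congr rfl fun v _ => ?_
    rw [← card_neighborFinset_eq_degree, add_comm, card_sdiff_add_card_inter]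
  have hinside :
      ∑ v ∈ S, #(G.neighborFinset v ∩ S) = 2 * #(G.induce (S : Set V)).edgeFinset := by
    rw [← sum_degrees_eq_twice_card_edges, ← sum_coe_sort S]
    exact sum_congr rfl fun v _ => (degree_induce_coe_finset S v).symm
  have hconnected : #S ≤ #(G.induce (S : Set V)).edgeFinset + 1 := by
    simpa [Nat.card_eq_fintype_card, edgeFinset_card] using hS.card_vert_le_card_edgeSet_add_one
  omega

variable {W : Type*} [Fintype W] {H : SimpleGraph W} [DecidableRel H.Adj]

lemma exists_three_le_degree_of_branchSets {B : W → Set V} {w : W}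
    (hconn : (G.induce (B w)).Connected) (hdisj : Pairwise fun w w' => Disjoint (B w) (B w'))
    (hedge : ∀ ⦃w'⦄, H.Adj w w' → ∃ u ∈ B w, ∃ v ∈ B w', G.Adj u v)
    (hw : 3 ≤ H.degree w) :
    ∃ u ∈ B w, 3 ≤ G.degree u := by
  classical
  by_contra! hlow
  set S := (B w).toFinset
  have hS : (G.induce (S : Set V)).Connected := by rwa [Set.coe_toFinset]
  have hdeg : ∑ u ∈ S, G.degree u ≤ #S * 2 :=
    sum_le_card_nsmul S _ 2 fun u hu => Nat.le_of_lt_succ (hlow u (by simpa [S] using hu))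
  have hleaving : H.degree w ≤ #(S.sigma fun u => G.neighborFinset u \ S) := by
    rw [← card_neighborFinset_eq_degree]
    refine card_le_card_of_forall_subsingleton (fun w' (e : Σ _ : V, V) => e.2 ∈ B w') ?_ ?_
    · intro w' hw'
      obtain ⟨u, hu, v, hv, huv⟩ := hedge ((mem_neighborFinset ..).1 hw')
      have hvS : v ∉ S := fun hvS => H.ne_of_adj ((mem_neighborFinset ..).1 hw')
        (hdisj.eq (Set.not_disjoint_iff.2 ⟨v, by simpa [S] using hvS, hv⟩))
      exact ⟨⟨u, v⟩, mem_sigma.2 ⟨by simpa [S] using hu, mem_sdiff.2 ⟨by simpa, hvS⟩⟩,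
        hv⟩
    · exact fun e _ w₁ hw₁ w₂ hw₂ =>
        hdisj.eq (Set.not_disjoint_iff.2 ⟨e.2, hw₁.2, hw₂.2⟩)
  have := sum_card_neighborFinset_sdiff_add_le S hS
  rw [card_sigma] at hleaving
  omega

theorem HasMinor.card_three_le_degree_le (h : HasMinor G H) :
    #{w | 3 ≤ H.degree w} ≤ #{v | 3 ≤ G.degree v} := by
  obtain ⟨B, -, hconn, hdisj, hedge⟩ := h
  refine card_le_card_of_forall_subsingleton (fun w v => v ∈ B w) (fun w hw => ?_)
    fun v _ w₁ hw₁ w₂ hw₂ => hdisj.eq (Set.not_disjoint_iff.2 ⟨v, hw₁.2, hw₂.2⟩)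
  obtain ⟨u, hu, hdeg⟩ := exists_three_le_degree_of_branchSets (hconn w) hdisj
    (fun _ h => hedge h) (mem_filter.1 hw).2
  exact ⟨u, mem_filter.2 ⟨mem_univ u, hdeg⟩, hu⟩

end Finite

end SimpleGraph

namespace ThetaGraph

/-- Vertex `0` and vertex `1` joined by the three paths `0 - (2 + i) - (5 + i) - 1`, `i < 3`. -/
def edges : List (Fin 8 × Fin 8) :=
  [(0, 2), (0, 3), (0, 4), (2, 5), (3, 6), (4, 7), (5, 1), (6, 1), (7, 1)]

def graph : SimpleGraph (Fin 8) := fromRel fun u v => (u, v) ∈ edges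

instance : DecidableRel graph.Adj := fun u v =>
  decidable_of_iff (u ≠ v ∧ ((u, v) ∈ edges ∨ (v, u) ∈ edges)) Iff.rfl

instance : DecidableRel (exactSquare graph).Adj := fun _ _ =>
  decidable_of_iff _ exactSquare_adj.symm

lemma colorable_two : graph.Colorable 2 :=
  ⟨Coloring.mk (![0, 1, 1, 1, 1, 0, 0, 0] : Fin 8 → Fin 2) fun {u v} => by revert u v; decide⟩

lemma degree_le_three (v : Fin 8) : graph.degree v ≤ 3 := by
  revert v; decide

lemma card_three_le_degree : #{v | 3 ≤ graph.degree v} = 2 := by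
  decide

lemma not_hasMinor_K4 : ¬HasMinor graph (completeGraph (Fin 4)) := by
  intro h
  have := h.card_three_le_degree_le
  rw [card_three_le_degree] at this
  revert this; decide

lemma no_four_cycle (x y z t : Fin 8) (hxy : graph.Adj x y) (hyz : graph.Adj y z)
    (hzt : graph.Adj z t) (htx : graph.Adj t x) : x = z ∨ y = t := by
  revert x y z t; decide

def hexagon : graph.Walk 0 0 :=
  .cons (by decide : graph.Adj 0 2) <| .cons (by decide : graph.Adj 2 5) <|
    .cons (by decide : graph.Adj 5 1) <| .cons (by decide : graph.Adj 1 6) <|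
    .cons (by decide : graph.Adj 6 3) <| .cons (by decide : graph.Adj 3 0) .nil

lemma hexagon_isCycle : hexagon.IsCycle := by
  rw [Walk.isCycle_def, Walk.isTrail_def]
  simp [hexagon, Walk.edges_cons, Walk.support_cons]

lemma egirth_eq_six : graph.egirth = 6 :=
  le_antisymm (egirth_le_length hexagon_isCycle)
    (six_le_egirth_of_colorable_two colorable_two no_four_cycle)

lemma isNClique_exactSquare : (exactSquare graph).IsNClique 4 {0, 5, 6, 7} := by
  decide

/-- The exact square is the disjoint union of the cliques on `{0, 5, 6, 7}` and `{1, 2, 3, 4}`. -/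
lemma colorable_four_exactSquare : (exactSquare graph).Colorable 4 :=
  ⟨Coloring.mk (![0, 0, 1, 2, 3, 1, 2, 3] : Fin 8 → Fin 4) fun {u v} => by revert u v; decide⟩

end ThetaGraph

open ThetaGraph in
/-- There exists a bipartite subcubic `K₄`-minor-free graph of girth `6` whose
exact square has clique number exactly `4`. -/
theorem exists_bipartite_subcubic_K4free_girth6_omega4 :
    ∃ (n : ℕ) (G : SimpleGraph (Fin n)),
      G.Colorable 2 ∧
      (∀ v, (G.neighborSet v).ncard ≤ 3) ∧
      ¬ HasMinor G (SimpleGraph.completeGraph (Fin 4)) ∧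
      G.egirth = 6 ∧
      (∃ s : Finset (Fin n), (exactSquare G).IsNClique 4 s) ∧
      (exactSquare G).CliqueFree 5 := by
  refine ⟨8, graph, colorable_two, fun v => ?_, not_hasMinor_K4, egirth_eq_six,
    ⟨_, isNClique_exactSquare⟩, colorable_four_exactSquare.cliqueFree (by norm_num)⟩
  rw [← Nat.card_coe_set_eq, Nat.card_eq_fintype_card, card_neighborSet_eq_degree]
  exact degree_le_three v
end

section
/- In any proper 3-coloring of the exact square of the graph consisting of a central 5-cycle x y u₄ u₃ u₂ surrounded by three consecutive pentagons (as in Figure 6: 5-cycles u₁ u₂ x v₂ v₁, v₂ v₃ v₄ y x (with the central pentagon), and v₄ v₅ u₅ u₄ y), the vertices x and y receive distinct colors. -/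
def figure6Graph : SimpleGraph (Fin 12) :=
  SimpleGraph.fromRel (fun u v => (u.val, v.val) ∈
    [(3,2), (2,0), (0,1), (1,4), (4,3),
     (0,8), (8,9), (9,10), (10,1),
     (2,5), (5,7), (7,8),
     (4,6), (6,11), (11,10)])

namespace SimpleGraph

variable {V : Type*} {G : SimpleGraph V} {u v w : V}

lemma dist_eq_two_iff :
    G.dist u v = 2 ↔ u ≠ v ∧ ¬G.Adj u v ∧ (G.commonNeighbors u v).Nonempty := by
  rw [dist, ENat.toNat_eq_iff two_ne_zero, Nat.cast_ofNat, edist_eq_two_iff]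

lemma exactSquare_adj_of_adj_of_adj (huw : G.Adj u w) (hwv : G.Adj w v) (huv : u ≠ v)
    (hnadj : ¬G.Adj u v) : (exactSquare G).Adj u v :=
  dist_eq_two_iff.mpr ⟨huv, hnadj, w, (G.mem_commonNeighbors).mpr ⟨huw, hwv.symm⟩⟩

end SimpleGraph

instance : DecidableRel figure6Graph.Adj :=
  fun _ _ => decidable_of_iff' _ (by unfold figure6Graph; exact SimpleGraph.fromRel_adj ..)

lemma fin_three_pentagon_uses_all_colors {a b c d e : Fin 3} (hab : a ≠ b) (hbc : b ≠ c)
    (hcd : c ≠ d) (hde : d ≠ e) (hea : e ≠ a) (k : Fin 3) : k = a ∨ k = b ∨ k = c ∨ k = d ∨ k = e := by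
  revert a b c d e k
  decide

/-- In any proper 3-coloring of the exact square of the graph of Figure 6, the
adjacent central vertices `x` and `y` receive distinct colors. -/
theorem figure6_x_y_distinct (φ : Fin 12 → Fin 3)
    (hφ : ∀ ⦃u v⦄, (exactSquare figure6Graph).Adj u v → φ u ≠ φ v) :
    φ 0 ≠ φ 1 := by
  have two_step : ∀ a w b : Fin 12, figure6Graph.Adj a w ∧ figure6Graph.Adj w b ∧ a ≠ b ∧
      ¬figure6Graph.Adj a b → φ a ≠ φ b :=
    fun _ _ _ ⟨haw, hwb, hab, hnadj⟩ =>
      hφ (SimpleGraph.exactSquare_adj_of_adj_of_adj haw hwb hab hnadj)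
  intro hxy
  have hu₁ : φ 5 ≠ φ 0 := (two_step 0 2 5 (by decide)).symm
  have hv₄ : φ 10 ≠ φ 0 := (two_step 0 1 10 (by decide)).symm
  have hu₃ : φ 3 ≠ φ 0 := hxy ▸ (two_step 1 4 3 (by decide)).symm
  have hu₅ : φ 6 ≠ φ 0 := hxy ▸ (two_step 1 4 6 (by decide)).symm
  have hv₂ : φ 8 ≠ φ 0 := hxy ▸ (two_step 1 0 8 (by decide)).symm
  have hpentagon := fin_three_pentagon_uses_all_colors (two_step 3 2 5 (by decide))
    (two_step 5 7 8 (by decide)) (two_step 8 9 10 (by decide)) (two_step 10 11 6 (by decide))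
    (two_step 6 4 3 (by decide)) (φ 0)
  rcases hpentagon with h | h | h | h | h
  exacts [hu₃ h.symm, hu₁ h.symm, hv₂ h.symm, hv₄ h.symm, hu₅ h.symm]
end

section
/- For every k ≥ 1, the k-drum fullerene graph is exact square 3-colorable; i.e., its exact square has chromatic number at most 3. -/
/-- The `k`-drum fullerene graph, a `(6,0)`-nanotube: its vertices form
`2k + 2` concentric rings of six vertices. Ring `0` and ring `2k+1` are
hexagonal faces (the two caps `F`, `F'`); consecutive rings `j`, `j+1` are
joined by a perfect matching when `j` is even, and in a zigzag fashion
(vertex `i` of ring `j` joined to vertices `i` and `i+1` of ring `j+1`) when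
`j` is odd. For `k = 1` this is the unique fullerene on 24 vertices. -/
def drum (k : ℕ) : SimpleGraph (Fin (2 * k + 2) × Fin 6) :=
  SimpleGraph.fromRel (fun a b =>
    -- hexagon edges on the two cap rings
    (a.1 = b.1 ∧ (a.1.val = 0 ∨ a.1.val = 2 * k + 1) ∧
      b.2.val = (a.2.val + 1) % 6) ∨
    -- edges between consecutive rings
    (b.1.val = a.1.val + 1 ∧
      ((a.1.val % 2 = 0 ∧ b.2 = a.2) ∨
       (a.1.val % 2 = 1 ∧ (b.2 = a.2 ∨ b.2.val = (a.2.val + 1) % 6)))))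

namespace SimpleGraph

variable {V : Type*} {G : SimpleGraph V}

lemma edist_eq_two_of_dist_eq_two {u v : V} (h : G.dist u v = 2) : G.edist u v = 2 :=
  (ENat.toNat_eq_iff two_ne_zero).mp h

lemma exactSquare_colorable_of_injOn_neighborSet {n : ℕ} (c : V → Fin n)
    (hc : ∀ w, Set.InjOn c (G.neighborSet w)) : (exactSquare G).Colorable n := by
  refine ⟨Coloring.mk c fun {u v} h hcuv => ?_⟩
  obtain ⟨huv, -, w, hw⟩ := edist_eq_two_iff.mp (edist_eq_two_of_dist_eq_two h)
  rw [mem_commonNeighbors] at hw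
  exact huv (hc w hw.1.symm hw.2.symm hcuv)

end SimpleGraph

def drumColor {k : ℕ} (p : Fin (2 * k + 2) × Fin 6) : Fin 3 :=
  ⟨(p.2.val + p.1.val / 2) % 3, Nat.mod_lt _ (by norm_num)⟩

lemma drumColor_injOn_neighborSet (k : ℕ) (w : Fin (2 * k + 2) × Fin 6) :
    Set.InjOn drumColor ((drum k).neighborSet w) := by
  intro u hu v hv huv
  simp only [drumColor, Fin.mk.injEq] at huv
  simp only [SimpleGraph.mem_neighborSet, drum, SimpleGraph.fromRel_adj, ne_eq, Prod.ext_iff,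
    Fin.ext_iff] at hu hv ⊢
  omega

theorem drum_exactSquare_three_colorable_general (k : ℕ) :
    (exactSquare (drum k)).Colorable 3 :=
  SimpleGraph.exactSquare_colorable_of_injOn_neighborSet drumColor
    (drumColor_injOn_neighborSet k)

/-- For every `k ≥ 1`, the `k`-drum is exact square 3-colorable. -/
theorem drum_exactSquare_three_colorable (k : ℕ) (hk : 1 ≤ k) :
    (exactSquare (drum k)).Colorable 3 :=
  drum_exactSquare_three_colorable_general k
end
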